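/- Let l ≥ 1 be an integer, let η > 0 and q ∈ (1,2), and define C(s) = ((sᵀs)^{1−1/q} − η)/((sᵀs)^{1−1/q} + η) for s ∈ ℝ^l. If a sequence (s_k)_{k∈ℕ} in ℝ^l satisfies s_{k+1} = C(s_k)·s_k for all k, then the sequence k ↦ ‖s_k‖ is non-increasing, it is strictly decreasing at every k for which s_k ≠ 0, and s_k → 0 as k → ∞. -/
import Mathlib


open scoped InnerProductSpace

/-- The control gain function C of Lemma 2. -/
noncomputable def Cfun (l : ℕ) (η q : ℝ) (s : EuclideanSpace ℝ (Fin l)) : ℝ :=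
  (⟪s, s⟫_ℝ ^ (1 - 1 / q) - η) / (⟪s, s⟫_ℝ ^ (1 - 1 / q) + η)

/-- Lemma 2 (stability/convergence content): the recursion s_{k+1} = C(s_k) s_k makes
‖s_k‖ non-increasing, strictly decreasing off 0, and drives s_k → 0. -/
theorem stmt_8 (l : ℕ) (hl : 1 ≤ l) (η q : ℝ) (hη : 0 < η) (hq : q ∈ Set.Ioo (1:ℝ) 2)
    (s : ℕ → EuclideanSpace ℝ (Fin l))
    (hrec : ∀ k, s (k + 1) = Cfun l η q (s k) • s k) :
    (∀ k, ‖s (k + 1)‖ ≤ ‖s k‖) ∧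
    (∀ k, s k ≠ 0 → ‖s (k + 1)‖ < ‖s k‖) ∧
    Filter.Tendsto s Filter.atTop (nhds 0) := by
  obtain ⟨hq1, hq2⟩ := hq
  set e : ℝ := 1 - 1/q with he_def
  have hq0 : 0 < q := by linarith
  have he : 0 < e := by
    have h1 : 1/q < 1 := by rw [div_lt_one hq0]; exact hq1
    simp only [he_def]; linarith
  have hnorm : ∀ k, ‖s (k+1)‖ = |((‖s k‖^2) ^ e - η)/((‖s k‖^2) ^ e + η)| * ‖s k‖ := by
    intro k
    rw [hrec k, norm_smul, Real.norm_eq_abs, Cfun, real_inner_self_eq_norm_sq]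
  have habs_le : ∀ r : ℝ, |((r^2) ^ e - η)/((r^2) ^ e + η)| ≤ 1 := by
    intro r
    have ha : 0 ≤ (r^2 : ℝ) ^ e := Real.rpow_nonneg (sq_nonneg r) e
    rw [abs_div, abs_of_pos (by linarith : (0:ℝ) < (r^2)^e + η), div_le_one (by linarith)]
    exact abs_le.mpr ⟨by linarith, by linarith⟩
  have habs_lt : ∀ r : ℝ, 0 < r → |((r^2) ^ e - η)/((r^2) ^ e + η)| < 1 := by
    intro r hr
    have ha : 0 < (r^2 : ℝ) ^ e := Real.rpow_pos_of_pos (by positivity) e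
    rw [abs_div, abs_of_pos (by linarith : (0:ℝ) < (r^2)^e + η), div_lt_one (by linarith)]
    exact abs_lt.mpr ⟨by linarith, by linarith⟩
  have part1 : ∀ k, ‖s (k + 1)‖ ≤ ‖s k‖ := by
    intro k
    rw [hnorm k]
    have h := habs_le ‖s k‖
    nlinarith [norm_nonneg (s k), abs_nonneg (((‖s k‖^2) ^ e - η)/((‖s k‖^2) ^ e + η))]
  have part2 : ∀ k, s k ≠ 0 → ‖s (k + 1)‖ < ‖s k‖ := by
    intro k hk
    have hr : 0 < ‖s k‖ := norm_pos_iff.mpr hk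
    rw [hnorm k]
    have h := habs_lt ‖s k‖ hr
    nlinarith
  refine ⟨part1, part2, ?_⟩
  set u : ℕ → ℝ := fun k => ‖s k‖ with hu_def
  have hant : Antitone u := antitone_nat_of_succ_le part1
  have hbdd : BddBelow (Set.range u) := ⟨0, by rintro _ ⟨k, rfl⟩; exact norm_nonneg _⟩
  have hL : Filter.Tendsto u Filter.atTop (nhds (⨅ i, u i)) :=
    tendsto_atTop_ciInf hant hbdd
  set L : ℝ := ⨅ i, u i with hL_def
  have hL0 : 0 ≤ L := le_ciInf fun i => norm_nonneg _
  have hLzero : L = 0 := by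
    by_contra hne
    have hLpos : 0 < L := lt_of_le_of_ne hL0 (Ne.symm hne)
    set g : ℝ → ℝ := fun r => |((r^2) ^ e - η)/((r^2) ^ e + η)| * r with hg_def
    have ha : 0 < (L^2 : ℝ) ^ e := Real.rpow_pos_of_pos (by positivity) e
    have h1 : ContinuousAt (fun r : ℝ => (r^2) ^ e) L :=
      ((continuous_pow 2).continuousAt).rpow_const (Or.inl (by positivity))
    have hcont : ContinuousAt g L := by
      refine ContinuousAt.mul (ContinuousAt.abs ?_) continuousAt_id
      exact (h1.sub continuousAt_const).div (h1.add continuousAt_const) (by positivity)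
    have ht1 : Filter.Tendsto (fun k => u (k+1)) Filter.atTop (nhds L) :=
      hL.comp (Filter.tendsto_add_atTop_nat 1)
    have ht2 : Filter.Tendsto (fun k => g (u k)) Filter.atTop (nhds (g L)) :=
      hcont.tendsto.comp hL
    have heq : (fun k => u (k+1)) = fun k => g (u k) := by
      funext k; exact hnorm k
    rw [heq] at ht1
    have hgL : g L = L := tendsto_nhds_unique ht2 ht1
    have hlt := habs_lt L hLpos
    have hnn := abs_nonneg (((L^2) ^ e - η)/((L^2) ^ e + η))
    have : g L < L := by
      simp only [hg_def]
      nlinarith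
    linarith [this, hgL.ge]
  rw [hLzero] at hL
  exact tendsto_zero_iff_norm_tendsto_zero.mpr hL
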